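/- arXiv:1708.04903 — 4 statements merged into one kernel-verified Lean document; each statement's English description precedes it below -/
import Mathlib

section
/- For any positive integer k and any real numbers x, y > 0, y(x+y)^k ≤ (k/(k+1)) x^{k+1} + b_k y^{k+1}, where b_k = (1+z_0)^{k-1} (1 + z_0/(k+1)) and z_0 > 0 is the unique positive root of the equation z^k = (1+z)^{k-1} (i.e., taking a(k) = 1 in the smoothness inequality). -/
/-!
Write `k = m + 1`. Since `t ↦ t ^ (m + 1) / (1 + t) ^ m` is strictly increasing on `[0, ∞)`, the
equation `z ^ (m + 1) = (1 + z) ^ m` has at most one nonnegative root `z₀`, one exists by the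
intermediate value theorem, and `t ^ (m + 1) - (1 + t) ^ m` is negative before `z₀` and positive
after it. The latter is, up to the factor `m + 1`, the derivative of
`F t = (m + 1) / (m + 2) * t ^ (m + 2) - (1 + t) ^ (m + 1)`, so `F` attains its minimum over
`[0, ∞)` at `z₀`, where it equals `-b_k` thanks to the root equation. Putting `t = x / y` and
multiplying by `y ^ (m + 2)` gives the inequality.
-/

open Set

lemma pow_succ_mul_one_add_pow_lt (m : ℕ) {a b : ℝ} (ha : 0 ≤ a) (hab : a < b) :
    a ^ (m + 1) * (1 + b) ^ m < (1 + a) ^ m * b ^ (m + 1) := by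
  have hb : 0 < b := ha.trans_lt hab
  have hcross : (a * (1 + b)) ^ m ≤ (b * (1 + a)) ^ m :=
    pow_le_pow_left₀ (by positivity) (by nlinarith) m
  calc a ^ (m + 1) * (1 + b) ^ m = (a * (1 + b)) ^ m * a := by rw [mul_pow]; ring
    _ ≤ (b * (1 + a)) ^ m * a := mul_le_mul_of_nonneg_right hcross ha
    _ < (b * (1 + a)) ^ m * b := mul_lt_mul_of_pos_left hab (by positivity)
    _ = (1 + a) ^ m * b ^ (m + 1) := by rw [mul_pow]; ring

lemma exists_pos_pow_succ_eq_one_add_pow (m : ℕ) : ∃ z : ℝ, 0 < z ∧ z ^ (m + 1) = (1 + z) ^ m := by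
  set g : ℝ → ℝ := fun t ↦ t ^ (m + 1) - (1 + t) ^ m
  have hB : (1 : ℝ) ≤ 2 ^ m := one_le_pow₀ one_le_two
  have hg0 : g 0 = -1 := by simp [g]
  have hgB : 0 ≤ g (2 ^ m) := by
    simp only [g, sub_nonneg]
    calc (1 + 2 ^ m : ℝ) ^ m ≤ (2 * 2 ^ m) ^ m := pow_le_pow_left₀ (by positivity) (by linarith) m
      _ = (2 ^ m) ^ (m + 1) := by ring
  obtain ⟨z, ⟨hz, -⟩, hgz⟩ := intermediate_value_Ioc (by positivity) (by fun_prop)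
    (show (0 : ℝ) ∈ Ioc (g 0) (g (2 ^ m)) from ⟨by rw [hg0]; norm_num, hgB⟩)
  exact ⟨z, hz, sub_eq_zero.mp hgz⟩

section Root

variable {m : ℕ} {z₀ : ℝ}

lemma pow_succ_lt_one_add_pow_iff (hz₀ : 0 ≤ z₀) (hroot : z₀ ^ (m + 1) = (1 + z₀) ^ m)
    {t : ℝ} (ht : 0 ≤ t) : t ^ (m + 1) < (1 + t) ^ m ↔ t < z₀ := by
  have hpos : 0 < (1 + z₀) ^ m := by positivity
  constructor
  · intro hlt
    by_contra! hle
    rcases hle.eq_or_lt with rfl | hgt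
    · exact hlt.ne hroot
    · have := pow_succ_mul_one_add_pow_lt m hz₀ hgt
      rw [hroot] at this
      exact (lt_asymm hlt) (lt_of_mul_lt_mul_left this hpos.le)
  · intro hlt
    have := pow_succ_mul_one_add_pow_lt m ht hlt
    rw [hroot] at this
    exact lt_of_mul_lt_mul_right this hpos.le

lemma eq_of_pow_succ_eq_one_add_pow (hz₀ : 0 ≤ z₀) (hroot : z₀ ^ (m + 1) = (1 + z₀) ^ m)
    {y : ℝ} (hy : 0 ≤ y) (hyroot : y ^ (m + 1) = (1 + y) ^ m) : y = z₀ := by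
  have hyz : ¬ y < z₀ := by
    rw [← pow_succ_lt_one_add_pow_iff hz₀ hroot hy, hyroot]
    exact lt_irrefl _
  have hzy : ¬ z₀ < y := by
    rw [← pow_succ_lt_one_add_pow_iff hy hyroot hz₀, hroot]
    exact lt_irrefl _
  exact le_antisymm (not_lt.mp hzy) (not_lt.mp hyz)

lemma one_add_pow_le_of_root (hz₀ : 0 ≤ z₀) (hroot : z₀ ^ (m + 1) = (1 + z₀) ^ m) {z : ℝ} (hz : 0 ≤ z) :
    (1 + z) ^ (m + 1) ≤ (m + 1) / (m + 2) * z ^ (m + 2) + (1 + z₀) ^ m * (1 + z₀ / (m + 2)) := by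
  set F : ℝ → ℝ := fun t ↦ (m + 1) / (m + 2) * t ^ (m + 2) - (1 + t) ^ (m + 1)
  have hF : ∀ t, HasDerivAt F ((m + 1) * (t ^ (m + 1) - (1 + t) ^ m)) t := by
    intro t
    refine (((hasDerivAt_pow (m + 2) t).const_mul ((m + 1 : ℝ) / (m + 2))).sub
      (((hasDerivAt_id' t).const_add 1).pow (m + 1))).congr_deriv ?_
    push_cast
    field_simp
  have hFd : Differentiable ℝ F := fun t ↦ (hF t).differentiableAt
  have hmin : IsMinOn F (Ici 0) z₀ := by
    refine isMinOn_Ici_of_deriv hFd.continuous.continuousAt hFd.continuous.continuousAt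
      hFd.differentiableOn hFd.differentiableOn (fun t ht ↦ ?_) (fun t ht ↦ ?_)
    · rw [(hF t).deriv]
      have := (pow_succ_lt_one_add_pow_iff hz₀ hroot ht.1.le).mpr ht.2
      nlinarith
    · rw [(hF t).deriv]
      have := (pow_succ_lt_one_add_pow_iff hz₀ hroot (hz₀.trans ht.le)).not.mpr (not_lt.mpr ht.le)
      nlinarith
  have hFz₀ : F z₀ = -((1 + z₀) ^ m * (1 + z₀ / (m + 2))) := by
    have : z₀ ^ (m + 2) = (1 + z₀) ^ m * z₀ := by rw [pow_succ, hroot]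
    simp only [F, this]
    field_simp
    ring
  have : F z₀ ≤ F z := hmin (mem_Ici.mpr hz)
  simp only [hFz₀, F] at this
  linarith

lemma mul_add_pow_le_of_root (hz₀ : 0 ≤ z₀) (hroot : z₀ ^ (m + 1) = (1 + z₀) ^ m) {x y : ℝ}
    (hx : 0 ≤ x) (hy : 0 < y) :
    y * (x + y) ^ (m + 1) ≤
      (m + 1) / (m + 2) * x ^ (m + 2) + (1 + z₀) ^ m * (1 + z₀ / (m + 2)) * y ^ (m + 2) := by
  obtain ⟨z, hz, rfl⟩ : ∃ z, 0 ≤ z ∧ x = z * y := ⟨x / y, by positivity, by field_simp⟩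
  calc y * (z * y + y) ^ (m + 1) = (1 + z) ^ (m + 1) * y ^ (m + 2) := by
        rw [show z * y + y = (1 + z) * y by ring, mul_pow]
        ring
    _ ≤ ((m + 1) / (m + 2) * z ^ (m + 2) + (1 + z₀) ^ m * (1 + z₀ / (m + 2))) * y ^ (m + 2) := by
        gcongr
        exact one_add_pow_le_of_root hz₀ hroot hz
    _ = _ := by ring

end Root

/-- Lemma 5 specialized to `a(k) = 1`: the equation `z^k = (1+z)^{k-1}` has a unique
positive root `z₀`, and with `b_k = (1+z₀)^{k-1} (1 + z₀/(k+1))`, for all `x, y > 0`,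
`y (x+y)^k ≤ (k/(k+1)) x^{k+1} + b_k y^{k+1}`. -/
theorem stmt1 (k : ℕ) (hk : 1 ≤ k) :
    (∃! z₀ : ℝ, 0 < z₀ ∧ z₀ ^ k = (1 + z₀) ^ (k - 1)) ∧
    ∀ z₀ : ℝ, 0 < z₀ → z₀ ^ k = (1 + z₀) ^ (k - 1) →
      ∀ x y : ℝ, 0 < x → 0 < y →
        y * (x + y) ^ k ≤ (k / (k + 1) : ℝ) * x ^ (k + 1) +
          ((1 + z₀) ^ (k - 1) * (1 + z₀ / (k + 1))) * y ^ (k + 1) := by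
  obtain ⟨m, rfl⟩ := Nat.exists_eq_add_of_le' hk
  simp only [Nat.add_sub_cancel]
  refine ⟨?_, fun z₀ hz₀ hroot x y hx hy ↦ ?_⟩
  · obtain ⟨z₀, hz₀, hroot⟩ := exists_pos_pow_succ_eq_one_add_pow m
    exact ⟨z₀, ⟨hz₀, hroot⟩, fun y ⟨hy, hyroot⟩ ↦
      eq_of_pow_succ_eq_one_add_pow hz₀.le hroot hy.le hyroot⟩
  · convert mul_add_pow_le_of_root hz₀.le hroot hx.le hy using 3 <;> push_cast <;> ring
end

section
/- Let f : 2^N → ℝ≥0 be monotone and (λ,μ)-smooth with λ > 0, μ < 1, for each resource. Consider any online greedy solution and optimal solution with resource-usage sets A*_e and O_e respectively. If for every request the greedy marginal cost is at most the marginal cost of the optimal strategy, then ∑_e f_e(A*_e) ≤ (λ/(1-μ)) ∑_e f_e(O_e). -/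
/-!
The dual fitting argument, read in the primal. Processing each `A*_e` in arrival order, the greedy
cost `∑_e f_e(A*_e)` telescopes into the sum, over requests, of the greedy marginal costs. By the
greedy hypothesis each of these is at most the marginal cost of the optimal strategy at the current
greedy state. Regrouping by resource, for each `e` the requests of `O_e` meet the increasing chain
of greedy prefixes, so smoothness bounds their total by `λ f_e(O_e) + μ f_e(A*_e)`. Summing over
`e` gives `(1 - μ) ∑_e f_e(A*_e) ≤ λ ∑_e f_e(O_e)`.
-/

open Finset

def IsSmooth {N : Type*} [DecidableEq N] (f : Finset N → ℝ) (lam mu : ℝ) : Prop :=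
  ∀ (n : ℕ) (a : Fin n → N), Function.Injective a →
    ∀ (B : Fin n → Finset N) (Bbig : Finset N),
      (∀ i j : Fin n, i ≤ j → B i ⊆ B j) → (∀ i, B i ⊆ Bbig) →
      ∑ i, (f (insert (a i) (B i)) - f (B i)) ≤
        lam * f (Finset.image a Finset.univ) + mu * f Bbig

section LinearOrder

variable {α G : Type*} [LinearOrder α] [AddCommGroup G]

theorem Finset.sum_insert_filter_lt_sub (f : Finset α → G) (s : Finset α) :
    ∑ i ∈ s, (f (insert i (s.filter (· < i))) - f (s.filter (· < i))) = f s - f ∅ := by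
  induction s using Finset.induction_on_max with
  | empty => simp
  | insert a s hlt ih =>
    have hprefix_a : (insert a s).filter (· < a) = s := by
      rw [filter_insert, if_neg (lt_irrefl a), filter_true_of_mem hlt]
    have hprefix_lt : ∀ j ∈ s, (insert a s).filter (· < j) = s.filter (· < j) := fun j hj => by
      rw [filter_insert, if_neg (hlt j hj).not_gt]
    rw [sum_insert fun ha => lt_irrefl a (hlt a ha), hprefix_a, sum_congr rfl fun j hj => by
      rw [hprefix_lt j hj], ih]
    abel

theorem IsSmooth.sum_insert_sub_le {f : Finset α → ℝ} {lam mu : ℝ} (hf : IsSmooth f lam mu)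
    (A Bbig : Finset α) {B : α → Finset α} (hB : Monotone B) (hBbig : ∀ i ∈ A, B i ⊆ Bbig) :
    ∑ i ∈ A, (f (insert i (B i)) - f (B i)) ≤ lam * f A + mu * f Bbig := by
  -- enumerating `A` increasingly turns the prefixes `B (a k)` into a chain
  let a := A.orderEmbOfFin rfl
  have hsum := sum_image (s := univ) (f := fun i => f (insert i (B i)) - f (B i))
    fun _ _ _ _ h => a.injective h
  rw [A.image_orderEmbOfFin_univ rfl] at hsum
  have hsmooth := hf _ a a.injective (fun k => B (a k)) Bbig (fun _ _ hkl => hB (a.monotone hkl))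
    (fun k => hBbig _ (A.orderEmbOfFin_mem rfl k))
  rwa [A.image_orderEmbOfFin_univ rfl, ← hsum] at hsmooth

end LinearOrder

theorem stmt5_general {E : Type*} [Fintype E] (n : ℕ)
    (f : E → Finset (Fin n) → ℝ) (lam mu : ℝ) (hmu : mu < 1)
    (hsmooth : ∀ e, IsSmooth (f e) lam mu)
    (hzero : ∀ e, f e ∅ = 0)
    (Astar O : E → Finset (Fin n))
    (hgreedy : ∀ i : Fin n,
      ∑ e ∈ Finset.univ.filter (fun e => i ∈ Astar e),
        (f e (insert i ((Astar e).filter (fun j => j < i))) -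
         f e ((Astar e).filter (fun j => j < i))) ≤
      ∑ e ∈ Finset.univ.filter (fun e => i ∈ O e),
        (f e (insert i ((Astar e).filter (fun j => j < i))) -
         f e ((Astar e).filter (fun j => j < i)))) :
    ∑ e, f e (Astar e) ≤ (lam / (1 - mu)) * ∑ e, f e (O e) := by
  set marginal : E → Fin n → ℝ := fun e i =>
    f e (insert i ((Astar e).filter (· < i))) - f e ((Astar e).filter (· < i))
  have hprefix_mono : ∀ e, Monotone fun i : Fin n => (Astar e).filter (· < i) :=
    fun e _ _ hij => monotone_filter_right _ fun _ _ hk => hk.trans_le hij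
  have hcost : ∑ e, f e (Astar e) ≤ lam * ∑ e, f e (O e) + mu * ∑ e, f e (Astar e) :=
    calc ∑ e, f e (Astar e) = ∑ e, ∑ i ∈ Astar e, marginal e i := by
          simp only [marginal, sum_insert_filter_lt_sub, hzero, sub_zero]
      _ = ∑ i, ∑ e ∈ univ.filter (fun e => i ∈ Astar e), marginal e i := sum_comm' (by simp)
      _ ≤ ∑ i, ∑ e ∈ univ.filter (fun e => i ∈ O e), marginal e i := sum_le_sum fun i _ => hgreedy i
      _ = ∑ e, ∑ i ∈ O e, marginal e i := sum_comm' (by simp)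
      _ ≤ ∑ e, (lam * f e (O e) + mu * f e (Astar e)) := sum_le_sum fun e _ =>
          (hsmooth e).sum_insert_sub_le _ _ (hprefix_mono e) fun _ _ => filter_subset _ _
      _ = lam * ∑ e, f e (O e) + mu * ∑ e, f e (Astar e) := by
          rw [sum_add_distrib, mul_sum, mul_sum]
  rw [div_mul_eq_mul_div, le_div_iff₀ (sub_pos.mpr hmu)]
  linarith

/-- Theorem 1 (dual fitting form).  Requests `Fin n` arrive in order; `Astar e` (resp. `O e`)
is the set of requests using resource `e` in the greedy (resp. optimal) solution, and
`Astar e |_{< i}` the greedy set just before request `i` arrives.  If each `f e` is monotone,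
`(λ,μ)`-smooth with `f e ∅ = 0`, and for every request the greedy marginal cost is at most
the marginal cost of the optimal strategy (evaluated at the current greedy state), then the
greedy cost is at most `λ/(1-μ)` times the optimal cost. -/
theorem stmt5 {E : Type*} [Fintype E] (n : ℕ)
    (f : E → Finset (Fin n) → ℝ) (lam mu : ℝ) (hlam : 0 < lam) (hmu : mu < 1)
    (hsmooth : ∀ e, IsSmooth (f e) lam mu)
    (hmono : ∀ e (S T : Finset (Fin n)), S ⊆ T → f e S ≤ f e T)
    (hzero : ∀ e, f e ∅ = 0)
    (Astar O : E → Finset (Fin n))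
    (hgreedy : ∀ i : Fin n,
      ∑ e ∈ Finset.univ.filter (fun e => i ∈ Astar e),
        (f e (insert i ((Astar e).filter (fun j => j < i))) -
         f e ((Astar e).filter (fun j => j < i))) ≤
      ∑ e ∈ Finset.univ.filter (fun e => i ∈ O e),
        (f e (insert i ((Astar e).filter (fun j => j < i))) -
         f e ((Astar e).filter (fun j => j < i)))) :
    ∑ e, f e (Astar e) ≤ (lam / (1 - mu)) * ∑ e, f e (O e) :=
  stmt5_general n f lam mu hmu hsmooth hzero Astar O hgreedy
end

section
/- Let f : 2^E → ℝ≥0 be a monotone submodular function with f(∅) = 0 on a finite set E, and let κ = 1 - min_{e ∈ E} (f(E) - f(E \ {e}))/f({e}) be its total curvature (assuming f({e}) > 0 for all e). Then for every S ⊆ E: f(S) ≥ (1 - κ) ∑_{e ∈ S} f({e}). -/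
open Finset

/-! Adding the elements of `S` one at a time, each marginal gain is at least the marginal gain of
the same element on top of all others, `f E - f (E \ {e})`, by submodularity; and by the
definition of `κ` that last gain is at least `(1 - κ) f {e}`. -/

section Submodular

variable {α β : Type*} [DecidableEq α] [AddCommGroup β] [PartialOrder β]

def IsSubmodular (f : Finset α → β) : Prop :=
  ∀ (S T : Finset α) (e : α), S ⊆ T → e ∉ T → f (insert e T) - f T ≤ f (insert e S) - f S

theorem IsSubmodular.sub_erase_le [Fintype α] {f : Finset α → β} (hf : IsSubmodular f)
    {S : Finset α} {e : α} (he : e ∉ S) :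
    f univ - f (univ.erase e) ≤ f (insert e S) - f S := by
  have := hf S (univ.erase e) e (fun x hx => mem_erase.mpr ⟨ne_of_mem_of_not_mem hx he, mem_univ x⟩)
    (notMem_erase e _)
  rwa [insert_erase (mem_univ e)] at this

theorem IsSubmodular.sum_sub_erase_le [IsOrderedAddMonoid β] [Fintype α] {f : Finset α → β} (hf : IsSubmodular f)
    (hempty : f ∅ = 0) (S : Finset α) :
    ∑ e ∈ S, (f univ - f (univ.erase e)) ≤ f S := by
  induction S using Finset.induction_on with
  | empty => simp [hempty]
  | insert a S ha ih =>
    rw [sum_insert ha]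
    calc f univ - f (univ.erase a) + ∑ e ∈ S, (f univ - f (univ.erase e))
        ≤ (f (insert a S) - f S) + f S := add_le_add (hf.sub_erase_le ha) ih
      _ = f (insert a S) := sub_add_cancel _ _

end Submodular

theorem stmt12_general {E : Type*} [DecidableEq E] [Fintype E] [Nonempty E]
    (f : Finset E → ℝ)
    (hsub : ∀ (S T : Finset E) (e : E), S ⊆ T → e ∉ T →
      f (insert e T) - f T ≤ f (insert e S) - f S)
    (hempty : f ∅ = 0) (hpos : ∀ e : E, 0 < f {e})
    (κ : ℝ)
    (hκ : κ = 1 - Finset.univ.inf' Finset.univ_nonempty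
      (fun e => (f Finset.univ - f (Finset.univ.erase e)) / f {e}))
    (S : Finset E) :
    (1 - κ) * ∑ e ∈ S, f {e} ≤ f S := by
  have hcurv : ∀ e, (1 - κ) * f {e} ≤ f univ - f (univ.erase e) := fun e => by
    rw [hκ, sub_sub_cancel, ← le_div_iff₀ (hpos e)]
    exact inf'_le _ (mem_univ e)
  calc (1 - κ) * ∑ e ∈ S, f {e} = ∑ e ∈ S, (1 - κ) * f {e} := mul_sum _ _ _
    _ ≤ ∑ e ∈ S, (f univ - f (univ.erase e)) := sum_le_sum fun e _ => hcurv e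
    _ ≤ f S := IsSubmodular.sum_sub_erase_le hsub hempty S

/-- Curvature lemma: for a monotone submodular `f` with `f ∅ = 0`, `f {e} > 0` for all `e`,
and total curvature `κ = 1 - min_e (f(E) - f(E\{e}))/f({e})`, every `S` satisfies
`f(S) ≥ (1-κ) ∑_{e∈S} f({e})`. -/
theorem stmt12 {E : Type*} [DecidableEq E] [Fintype E] [Nonempty E]
    (f : Finset E → ℝ)
    (hmono : ∀ S T : Finset E, S ⊆ T → f S ≤ f T)
    (hsub : ∀ (S T : Finset E) (e : E), S ⊆ T → e ∉ T →
      f (insert e T) - f T ≤ f (insert e S) - f S)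
    (hempty : f ∅ = 0) (hpos : ∀ e : E, 0 < f {e})
    (κ : ℝ)
    (hκ : κ = 1 - Finset.univ.inf' Finset.univ_nonempty
      (fun e => (f Finset.univ - f (Finset.univ.erase e)) / f {e}))
    (S : Finset E) :
    (1 - κ) * ∑ e ∈ S, f {e} ≤ f S :=
  stmt12_general f hsub hempty hpos κ hκ S
end

section
/- Suppose x_e : [0,T] → [0,1] satisfies the differential growth dx_e/dτ = (b·x_e + 1/d)/c for constants b, c, d > 0 while a dual variable α grows at rate dα/dτ = 1/(λ L) with L = ln(1+2d^2), starting from x_e(0) ≥ (1/(b d))(exp(λ L b α(0)/c) - 1). Then for all τ, x_e(τ) ≥ (1/(b d))(exp(λ L b α(τ)/c) - 1). -/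
/-! The gap `x - φ(α)` between the primal variable and the bound solves the linear equation
`g' = (b/c) g`, because `φ(α(τ))` obeys the same affine growth law `(b φ + 1/d)/c` as `x`.
Hence `g(τ) = exp(bτ/c) g(0)` keeps the sign of `g(0) ≥ 0`. -/

open Real Set

theorem eq_exp_mul_of_hasDerivAt_mul {g : ℝ → ℝ} {k T : ℝ}
    (hg : ∀ t ∈ Icc 0 T, HasDerivAt g (k * g t) t) :
    ∀ t ∈ Icc 0 T, g t = exp (k * t) * g 0 := by
  set h : ℝ → ℝ := fun t => exp (-(k * t)) * g t
  have hh : ∀ t ∈ Icc 0 T, HasDerivAt h 0 t := by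
    intro t ht
    have hexp : HasDerivAt (fun t => exp (-(k * t))) (exp (-(k * t)) * -k) t := by
      simpa using ((hasDerivAt_id t).const_mul k).neg.exp
    exact (hexp.mul (hg t ht)).congr_deriv (by ring)
  have hconst : ∀ t ∈ Icc 0 T, h t = h 0 :=
    constant_of_has_deriv_right_zero
      (fun t ht => (hh t ht).continuousAt.continuousWithinAt)
      (fun t ht => (hh t (Ico_subset_Icc_self ht)).hasDerivWithinAt)
  intro t ht
  have key : exp (-(k * t)) * g t = g 0 := by simpa [h] using hconst t ht
  rw [← key, ← mul_assoc, ← exp_add, add_neg_cancel, exp_zero, one_mul]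

theorem le_of_hasDerivAt_affine {x y : ℝ → ℝ} {k m T : ℝ}
    (hx : ∀ t ∈ Icc 0 T, HasDerivAt x (k * x t + m) t)
    (hy : ∀ t ∈ Icc 0 T, HasDerivAt y (k * y t + m) t) (h0 : y 0 ≤ x 0) :
    ∀ t ∈ Icc 0 T, y t ≤ x t := by
  have hgap : ∀ t ∈ Icc 0 T, HasDerivAt (x - y) (k * (x - y) t) t := fun t ht =>
    ((hx t ht).sub (hy t ht)).congr_deriv (by simp only [Pi.sub_apply]; ring)
  intro t ht
  have := eq_exp_mul_of_hasDerivAt_mul hgap t ht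
  simp only [Pi.sub_apply] at this
  nlinarith [exp_pos (k * t)]

/-- The bound `φ` of the paper, with `p = λ L`. -/
noncomputable def primalBound (p b c d a : ℝ) : ℝ := 1 / (b * d) * (exp (p * b * a / c) - 1)

theorem hasDerivAt_primalBound_comp {α : ℝ → ℝ} {p b c d t : ℝ} (hp : p ≠ 0) (hb : b ≠ 0)
    (hα : HasDerivAt α (1 / p) t) :
    HasDerivAt (fun s => primalBound p b c d (α s))
      (b / c * primalBound p b c d (α t) + 1 / (d * c)) t := by
  have hexp := (((hα.const_mul (p * b)).div_const c).exp.sub_const 1).const_mul (1 / (b * d))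
  refine hexp.congr_deriv ?_
  simp only [primalBound]
  field_simp
  ring

theorem stmt16_general (T b c d lam : ℝ) (hb : 0 < b) (hd : 0 < d)
    (hlam : 0 < lam)
    (L : ℝ) (hL : L = Real.log (1 + 2 * d ^ 2))
    (x α : ℝ → ℝ)
    (hx : ∀ τ ∈ Set.Icc 0 T, HasDerivAt x ((b * x τ + 1 / d) / c) τ)
    (hα : ∀ τ ∈ Set.Icc 0 T, HasDerivAt α (1 / (lam * L)) τ)
    (h0 : 1 / (b * d) * (Real.exp (lam * L * b * α 0 / c) - 1) ≤ x 0) :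
    ∀ τ ∈ Set.Icc 0 T,
      1 / (b * d) * (Real.exp (lam * L * b * α τ / c) - 1) ≤ x τ := by
  have hLpos : 0 < L := hL ▸ log_pos (by nlinarith)
  have hp : lam * L ≠ 0 := (mul_pos hlam hLpos).ne'
  exact le_of_hasDerivAt_affine (k := b / c) (m := 1 / (d * c))
    (y := fun τ => primalBound (lam * L) b c d (α τ))
    (fun τ hτ => (hx τ hτ).congr_deriv (by ring))
    (fun τ hτ => hasDerivAt_primalBound_comp hp hb.ne' (hα τ hτ)) h0

/-- Differential-inequality version of Lemma 2 (bound on the primal variable): if on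
`[0,T]` the primal variable grows as `x' = (b·x + 1/d)/c` while the dual variable grows as
`α' = 1/(λL)` with `L = ln(1+2d²)`, and initially `x 0 ≥ φ(α 0)` for
`φ(a) = (1/(bd))(exp(λLba/c) - 1)`, then `x τ ≥ φ(α τ)` for all `τ ∈ [0,T]`. -/
theorem stmt16 (T b c d lam : ℝ) (hT : 0 ≤ T) (hb : 0 < b) (hc : 0 < c) (hd : 0 < d)
    (hlam : 0 < lam)
    (L : ℝ) (hL : L = Real.log (1 + 2 * d ^ 2))
    (x α : ℝ → ℝ)
    (hx : ∀ τ ∈ Set.Icc 0 T, HasDerivAt x ((b * x τ + 1 / d) / c) τ)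
    (hα : ∀ τ ∈ Set.Icc 0 T, HasDerivAt α (1 / (lam * L)) τ)
    (h0 : 1 / (b * d) * (Real.exp (lam * L * b * α 0 / c) - 1) ≤ x 0) :
    ∀ τ ∈ Set.Icc 0 T,
      1 / (b * d) * (Real.exp (lam * L * b * α τ / c) - 1) ≤ x τ :=
  stmt16_general T b c d lam hb hd hlam L hL x α hx hα h0
end
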